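/- Let ρ be an n×n density matrix with eigenvalues 0 ≤ λ₁ ≤ λ₂ ≤ ⋯ ≤ λ_n, let A, B be n×n self-adjoint complex matrices, and let q ∈ ℝ with q < −1. Then q²·(λ₁ − qλ_n)²·|Tr[ρ[A₀,B₀]_{−1/q}]|² = q²·(λ₁ − qλ_n)²·|Tr[ρ{A₀,B₀}_{1/q}]|² = (λ₁ − qλ_n)²·|Tr[ρ{B₀,A₀}_q]|², and (λ₁ − qλ_n)²·|Tr[ρ{B₀,A₀}_q]|² ≤ (1−q)²·(λ₁ + qλ_n)²·V_ρ(A)·V_ρ(B). -/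

import Mathlib

open Matrix ComplexOrder

/-- `A₀ = A - Tr[ρA]·I`, the centered operator. -/
noncomputable def shift {n : ℕ} (ρ A : Matrix (Fin n) (Fin n) ℂ) : Matrix (Fin n) (Fin n) ℂ :=
  A - (ρ * A).trace • (1 : Matrix (Fin n) (Fin n) ℂ)

/-- `V_ρ(A) = Tr[ρA²] - (Tr[ρA])²` (a real number for self-adjoint `A` and density `ρ`). -/
noncomputable def variance {n : ℕ} (ρ A : Matrix (Fin n) (Fin n) ℂ) : ℝ :=
  ((ρ * (A * A)).trace - ((ρ * A).trace) ^ 2).re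

/-- the q-commutator `[A,B]_q = AB - q·BA`. -/
noncomputable def qComm {n : ℕ} (q : ℝ) (A B : Matrix (Fin n) (Fin n) ℂ) :
    Matrix (Fin n) (Fin n) ℂ :=
  A * B - (q : ℂ) • (B * A)

/-- the q-anti-commutator `{A,B}_q = AB + q·BA`. -/
noncomputable def qAnti {n : ℕ} (q : ℝ) (A B : Matrix (Fin n) (Fin n) ℂ) :
    Matrix (Fin n) (Fin n) ℂ :=
  A * B + (q : ℂ) • (B * A)

/-- `lam` lists the eigenvalues of `ρ` (with multiplicity) in increasing order. -/
def IsOrderedEigenvalues {n : ℕ} {ρ : Matrix (Fin n) (Fin n) ℂ}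
    (hρ : ρ.IsHermitian) (lam : Fin n → ℝ) : Prop :=
  Monotone lam ∧ ∃ σ : Equiv.Perm (Fin n), ∀ i, lam i = hρ.eigenvalues (σ i)

/-!
In an eigenbasis of `ρ`, with eigenvalues `dᵢ` and `zᵢⱼ = (A₀)ᵢⱼ · conj (B₀)ᵢⱼ`, symmetrizing the
double sum in `i, j` gives `2 Tr[ρ{B₀,A₀}_q] = ∑ᵢⱼ ((dⱼ + q dᵢ) zᵢⱼ + (dᵢ + q dⱼ) conj zᵢⱼ)`.
Each term has real part `(1 + q)(dᵢ + dⱼ) Re zᵢⱼ` and imaginary part `(1 - q)(dⱼ - dᵢ) Im zᵢⱼ`, and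
since every `dᵢ` lies in `[λ₁, λₙ]` and `q < -1`, both coefficients are at most
`(1 - q)(-λ₁ - qλₙ)/(λ₁ - qλₙ) · (dᵢ + dⱼ)` in absolute value. Summing, and applying the
Cauchy–Schwarz inequality with weights `dᵢ` against `V_ρ(A) = ∑ᵢⱼ dᵢ |(A₀)ᵢⱼ|²`, gives the
inequality. The two equalities are `[X, Y]_{-r} = {X, Y}_r` and `{B₀, A₀}_q = q {A₀, B₀}_{1/q}`.
-/

namespace Complex

lemma norm_ofReal_mul_add_ofReal_mul_star_le {s t c : ℝ} (z : ℂ)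
    (hadd : |s + t| ≤ c) (hsub : |s - t| ≤ c) :
    ‖(s : ℂ) * z + t * star z‖ ≤ c * ‖z‖ := by
  have hc : 0 ≤ c := (abs_nonneg _).trans hadd
  have hadd2 : (s + t) ^ 2 ≤ c ^ 2 := sq_le_sq' (abs_le.mp hadd).1 (abs_le.mp hadd).2
  have hsub2 : (s - t) ^ 2 ≤ c ^ 2 := sq_le_sq' (abs_le.mp hsub).1 (abs_le.mp hsub).2
  refine le_of_pow_le_pow_left₀ two_ne_zero (by positivity) ?_
  have hnorm : ‖(s : ℂ) * z + t * star z‖ ^ 2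
      = (s + t) ^ 2 * z.re ^ 2 + (s - t) ^ 2 * z.im ^ 2 := by
    simp only [Complex.sq_norm, normSq_apply, add_re, add_im, mul_re, mul_im, ofReal_re,
      ofReal_im, star_def, conj_re, conj_im]
    ring
  rw [hnorm, mul_pow, Complex.sq_norm, normSq_apply]
  nlinarith [sq_nonneg z.re, sq_nonneg z.im]

end Complex

lemma mul_norm_qAnti_term_le {q l₀ l₁ a b : ℝ} (z : ℂ) (hq : q < -1) (hl₀ : 0 ≤ l₀)
    (ha : a ∈ Set.Icc l₀ l₁) (hb : b ∈ Set.Icc l₀ l₁) :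
    (l₀ - q * l₁) * ‖((b + q * a : ℝ) : ℂ) * z + ((a + q * b : ℝ) : ℂ) * star z‖ ≤
      (1 - q) * (-l₀ - q * l₁) * (a + b) * ‖z‖ := by
  obtain ⟨ha₀, ha₁⟩ := ha
  obtain ⟨hb₀, hb₁⟩ := hb
  have hl₁ : 0 ≤ l₁ := hl₀.trans (ha₀.trans ha₁)
  have hab : 0 ≤ a + b := by linarith
  have hL : 0 ≤ l₀ - q * l₁ := by nlinarith
  have hl₀₁ : 0 ≤ -q * (l₁ - l₀) := mul_nonneg (by linarith) (by linarith)
  have hq₁ : (0 : ℝ) ≤ -q - 1 := by linarith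
  have hbl : b * l₀ ≤ -q * l₁ * a := by
    nlinarith [mul_le_mul hb₁ ha₀ hl₀ hl₁, mul_nonneg hq₁ (mul_nonneg hl₁ (hl₀.trans ha₀))]
  have hal : a * l₀ ≤ -q * l₁ * b := by
    nlinarith [mul_le_mul ha₁ hb₀ hl₀ hl₁, mul_nonneg hq₁ (mul_nonneg hl₁ (hl₀.trans hb₀))]
  have h1q : (0 : ℝ) ≤ 1 - q := by linarith
  rw [← Real.norm_of_nonneg hL, ← Complex.norm_real, ← norm_mul, mul_add, ← mul_assoc,
    ← mul_assoc, ← Complex.ofReal_mul, ← Complex.ofReal_mul]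
  apply Complex.norm_ofReal_mul_add_ofReal_mul_star_le <;> rw [abs_le] <;> constructor
  · nlinarith [mul_nonneg hl₀₁ hab, mul_nonneg hL hab]
  · nlinarith [mul_nonneg hL hab]
  · nlinarith [mul_nonneg h1q (sub_nonneg.mpr hal)]
  · nlinarith [mul_nonneg h1q (sub_nonneg.mpr hbl)]

namespace Matrix.IsHermitian

variable {m : Type*} [Fintype m] {ρ : Matrix m m ℂ}

lemma star_trace_mul (hρ : ρ.IsHermitian) {A : Matrix m m ℂ} (hA : A.IsHermitian) :
    star (ρ * A).trace = (ρ * A).trace := by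
  rw [← trace_conjTranspose, conjTranspose_mul, hA.eq, hρ.eq, trace_mul_comm]

variable [DecidableEq m]

noncomputable def eigenbasisConj (hρ : ρ.IsHermitian) : Matrix m m ℂ ≃⋆ₐ[ℂ] Matrix m m ℂ :=
  Unitary.conjStarAlgAut ℂ _ (star hρ.eigenvectorUnitary)

lemma eigenbasisConj_self (hρ : ρ.IsHermitian) :
    hρ.eigenbasisConj ρ = diagonal (fun i ↦ (hρ.eigenvalues i : ℂ)) :=
  hρ.conjStarAlgAut_star_eigenvectorUnitary

lemma trace_eigenbasisConj (hρ : ρ.IsHermitian) (X : Matrix m m ℂ) :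
    (hρ.eigenbasisConj X).trace = X.trace := by
  rw [eigenbasisConj, Unitary.conjStarAlgAut_star_apply, trace_mul_cycle,
    Unitary.mul_star_self_of_mem hρ.eigenvectorUnitary.2, Matrix.one_mul]

lemma isHermitian_eigenbasisConj (hρ : ρ.IsHermitian) {X : Matrix m m ℂ} (hX : X.IsHermitian) :
    (hρ.eigenbasisConj X).IsHermitian :=
  hX.isSelfAdjoint.map _

lemma trace_mul_mul_eq_sum (hρ : ρ.IsHermitian) (X Y : Matrix m m ℂ) :
    (ρ * (X * Y)).trace = ∑ i, ∑ j, (hρ.eigenvalues i : ℂ) *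
      (hρ.eigenbasisConj X i j * hρ.eigenbasisConj Y j i) := by
  rw [← trace_eigenbasisConj hρ, map_mul, map_mul, eigenbasisConj_self]
  refine Finset.sum_congr rfl fun i _ ↦ ?_
  rw [diag_apply, diagonal_mul, mul_apply, Finset.mul_sum]

lemma trace_mul_mul_self_eq_sum (hρ : ρ.IsHermitian) {X : Matrix m m ℂ} (hX : X.IsHermitian) :
    (ρ * (X * X)).trace =
      ((∑ i, ∑ j, hρ.eigenvalues i * ‖hρ.eigenbasisConj X i j‖ ^ 2 : ℝ) : ℂ) := by
  rw [trace_mul_mul_eq_sum hρ]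
  push_cast
  refine Finset.sum_congr rfl fun i _ ↦ Finset.sum_congr rfl fun j _ ↦ ?_
  rw [← (isHermitian_eigenbasisConj hρ hX).apply j i, Complex.star_def, Complex.mul_conj,
    Complex.normSq_eq_norm_sq]
  push_cast
  ring

end Matrix.IsHermitian

lemma two_mul_trace_mul_qAnti_eq_sum {n : ℕ} {ρ X Y : Matrix (Fin n) (Fin n) ℂ}
    (hρ : ρ.IsHermitian) (hX : X.IsHermitian) (hY : Y.IsHermitian) (q : ℝ) :
    2 * (ρ * qAnti q Y X).trace = ∑ i, ∑ j,
      (((hρ.eigenvalues j + q * hρ.eigenvalues i : ℝ) : ℂ) *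
          (hρ.eigenbasisConj X i j * star (hρ.eigenbasisConj Y i j)) +
        ((hρ.eigenvalues i + q * hρ.eigenvalues j : ℝ) : ℂ) *
          star (hρ.eigenbasisConj X i j * star (hρ.eigenbasisConj Y i j))) := by
  set d := hρ.eigenvalues
  set X' := hρ.eigenbasisConj X
  set Y' := hρ.eigenbasisConj Y
  set f : Fin n → Fin n → ℂ := fun i j ↦
    (d i : ℂ) * (Y' i j * X' j i) + q * ((d i : ℂ) * (X' i j * Y' j i))
  have hT : (ρ * qAnti q Y X).trace = ∑ i, ∑ j, f i j := by
    simp only [qAnti, Matrix.mul_add, Matrix.mul_smul, trace_add, trace_smul, smul_eq_mul,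
      hρ.trace_mul_mul_eq_sum, Finset.mul_sum, ← Finset.sum_add_distrib, f, X', Y', d]
  calc 2 * (ρ * qAnti q Y X).trace = ∑ i, ∑ j, f i j + ∑ i, ∑ j, f j i := by
        rw [two_mul, hT, Finset.sum_comm (f := fun j i ↦ f i j)]
    _ = ∑ i, ∑ j, (f i j + f j i) := by simp only [← Finset.sum_add_distrib]
    _ = _ := by
        refine Finset.sum_congr rfl fun i _ ↦ Finset.sum_congr rfl fun j _ ↦ ?_
        have hX' : X' j i = star (X' i j) := ((hρ.isHermitian_eigenbasisConj hX).apply j i).symm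
        have hY' : Y' j i = star (Y' i j) := ((hρ.isHermitian_eigenbasisConj hY).apply j i).symm
        simp only [f, hX', hY', star_mul', star_star]
        push_cast
        ring

section WeightedSums

variable {ι : Type*} [Fintype ι]

lemma sum_sum_add_mul_eq_two_mul_sum_sum (d : ι → ℝ) {f : ι → ι → ℝ}
    (hf : ∀ i j, f j i = f i j) :
    ∑ i, ∑ j, (d i + d j) * f i j = 2 * ∑ i, ∑ j, d i * f i j := by
  simp only [add_mul, Finset.sum_add_distrib]
  rw [Finset.sum_comm (f := fun i j ↦ d j * f i j)]
  simp only [hf]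
  ring

lemma sq_sum_sum_mul_mul_le {d : ι → ℝ} (hd : ∀ i, 0 ≤ d i) (f g : ι → ι → ℝ) :
    (∑ i, ∑ j, d i * (f i j * g i j)) ^ 2 ≤
      (∑ i, ∑ j, d i * f i j ^ 2) * ∑ i, ∑ j, d i * g i j ^ 2 := by
  simp only [← Fintype.sum_prod_type']
  exact Finset.sum_sq_le_sum_mul_sum_of_sq_le_mul _
    (fun p _ ↦ mul_nonneg (hd p.1) (sq_nonneg _)) (fun p _ ↦ mul_nonneg (hd p.1) (sq_nonneg _))
    (fun p _ ↦ le_of_eq (by ring))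

end WeightedSums

theorem sq_mul_sq_norm_trace_mul_qAnti_le {n : ℕ} {ρ X Y : Matrix (Fin n) (Fin n) ℂ}
    (hρ : ρ.IsHermitian) (hX : X.IsHermitian) (hY : Y.IsHermitian) {q l₀ l₁ : ℝ} (hq : q < -1)
    (hl₀ : 0 ≤ l₀) (hl₀₁ : l₀ ≤ l₁) (hspec : ∀ i, hρ.eigenvalues i ∈ Set.Icc l₀ l₁) :
    (l₀ - q * l₁) ^ 2 * ‖(ρ * qAnti q Y X).trace‖ ^ 2 ≤
      (1 - q) ^ 2 * (l₀ + q * l₁) ^ 2 * (ρ * (X * X)).trace.re * (ρ * (Y * Y)).trace.re := by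
  set d := hρ.eigenvalues
  set X' := hρ.eigenbasisConj X
  set Y' := hρ.eigenbasisConj Y
  set C := (1 - q) * (-l₀ - q * l₁)
  set S := ∑ i, ∑ j, d i * (‖X' i j‖ * ‖Y' i j‖)
  have hd : ∀ i, 0 ≤ d i := fun i ↦ hl₀.trans (hspec i).1
  have hL : 0 ≤ l₀ - q * l₁ := by nlinarith
  have hX' : X'.IsHermitian := hρ.isHermitian_eigenbasisConj hX
  have hY' : Y'.IsHermitian := hρ.isHermitian_eigenbasisConj hY
  have hsymm : ∀ i j, ‖X' j i‖ * ‖Y' j i‖ = ‖X' i j‖ * ‖Y' i j‖ := fun i j ↦ by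
    rw [← hX'.apply j i, ← hY'.apply j i, norm_star, norm_star]
  have hbound : (l₀ - q * l₁) * ‖(ρ * qAnti q Y X).trace‖ ≤ C * S := by
    have h2 : (l₀ - q * l₁) * ‖2 * (ρ * qAnti q Y X).trace‖ ≤
        ∑ i, ∑ j, C * (d i + d j) * (‖X' i j‖ * ‖Y' i j‖) := by
      rw [two_mul_trace_mul_qAnti_eq_sum hρ hX hY q]
      refine (mul_le_mul_of_nonneg_left (norm_sum_le _ _) hL).trans ?_
      rw [Finset.mul_sum]
      refine Finset.sum_le_sum fun i _ ↦ ?_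
      refine (mul_le_mul_of_nonneg_left (norm_sum_le _ _) hL).trans ?_
      rw [Finset.mul_sum]
      refine Finset.sum_le_sum fun j _ ↦ ?_
      have hterm := mul_norm_qAnti_term_le (X' i j * star (Y' i j)) hq hl₀ (hspec i) (hspec j)
      rwa [norm_mul, norm_star] at hterm
    simp only [mul_assoc, ← Finset.mul_sum] at h2
    rw [sum_sum_add_mul_eq_two_mul_sum_sum d hsymm, norm_mul, RCLike.norm_two] at h2
    linarith
  rw [hρ.trace_mul_mul_self_eq_sum hX, hρ.trace_mul_mul_self_eq_sum hY, Complex.ofReal_re,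
    Complex.ofReal_re]
  calc (l₀ - q * l₁) ^ 2 * ‖(ρ * qAnti q Y X).trace‖ ^ 2
      = ((l₀ - q * l₁) * ‖(ρ * qAnti q Y X).trace‖) ^ 2 := by ring
    _ ≤ (C * S) ^ 2 := pow_le_pow_left₀ (by positivity) hbound 2
    _ = C ^ 2 * S ^ 2 := by ring
    _ ≤ C ^ 2 * ((∑ i, ∑ j, d i * ‖X' i j‖ ^ 2) * ∑ i, ∑ j, d i * ‖Y' i j‖ ^ 2) := by
      gcongr
      exact sq_sum_sum_mul_mul_le hd _ _
    _ = _ := by ring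

section Centering

variable {n : ℕ}

lemma qComm_neg (r : ℝ) (A B : Matrix (Fin n) (Fin n) ℂ) : qComm (-r) A B = qAnti r A B := by
  simp only [qComm, qAnti, Complex.ofReal_neg, neg_smul, sub_neg_eq_add]

lemma qAnti_swap {q : ℝ} (hq : q ≠ 0) (A B : Matrix (Fin n) (Fin n) ℂ) :
    qAnti q B A = (q : ℂ) • qAnti q⁻¹ A B := by
  have hq' : (q : ℂ) ≠ 0 := Complex.ofReal_ne_zero.mpr hq
  simp only [qAnti, smul_add, smul_smul, Complex.ofReal_inv, mul_inv_cancel₀ hq', one_smul]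
  abel

lemma isHermitian_shift {ρ A : Matrix (Fin n) (Fin n) ℂ} (hρ : ρ.IsHermitian)
    (hA : A.IsHermitian) : (shift ρ A).IsHermitian := by
  rw [IsHermitian, shift, conjTranspose_sub, conjTranspose_smul, conjTranspose_one, hA.eq,
    hρ.star_trace_mul hA]

lemma variance_eq_re_trace_mul_shift_mul_shift {ρ : Matrix (Fin n) (Fin n) ℂ}
    (htr : ρ.trace = 1) (A : Matrix (Fin n) (Fin n) ℂ) :
    variance ρ A = (ρ * (shift ρ A * shift ρ A)).trace.re := by
  simp only [variance, shift, Matrix.sub_mul, Matrix.mul_sub, Matrix.smul_mul, Matrix.mul_smul,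
    Matrix.one_mul, Matrix.mul_one, trace_sub, trace_smul, htr, smul_eq_mul]
  ring_nf

end Centering

lemma IsOrderedEigenvalues.eigenvalues_mem_Icc {n : ℕ}
    {ρ : Matrix (Fin (n + 1)) (Fin (n + 1)) ℂ} {hρ : ρ.IsHermitian} {lam : Fin (n + 1) → ℝ}
    (hlam : IsOrderedEigenvalues hρ lam) (i : Fin (n + 1)) :
    hρ.eigenvalues i ∈ Set.Icc (lam 0) (lam (Fin.last n)) := by
  obtain ⟨hmono, σ, hσ⟩ := hlam
  rw [← Equiv.apply_symm_apply σ i, ← hσ]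
  exact ⟨hmono (Fin.zero_le _), hmono (Fin.le_last _)⟩

/-- Refined uncertainty relation, case `q < −1`:
`q²·(λ₁ − qλₙ)²·|Tr[ρ[A₀,B₀]_{−1/q}]|² = q²·(λ₁ − qλₙ)²·|Tr[ρ{A₀,B₀}_{1/q}]|²
 = (λ₁ − qλₙ)²·|Tr[ρ{B₀,A₀}_q]|²` and
`(λ₁ − qλₙ)²·|Tr[ρ{B₀,A₀}_q]|² ≤ (1−q)²·(λ₁ + qλₙ)²·V_ρ(A)·V_ρ(B)`. -/
theorem refined_uncertainty_of_lt_neg_one {n : ℕ}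
    (ρ A B : Matrix (Fin (n + 1)) (Fin (n + 1)) ℂ)
    (hρ : ρ.PosSemidef) (htr : ρ.trace = 1)
    (hA : A.IsHermitian) (hB : B.IsHermitian)
    (lam : Fin (n + 1) → ℝ) (hlam : IsOrderedEigenvalues hρ.1 lam)
    (hlam0 : 0 ≤ lam 0) (q : ℝ) (hq : q < -1) :
    q ^ 2 * (lam 0 - q * lam (Fin.last n)) ^ 2 *
        ‖(ρ * qComm (-1 / q) (shift ρ A) (shift ρ B)).trace‖ ^ 2 =
      q ^ 2 * (lam 0 - q * lam (Fin.last n)) ^ 2 *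
        ‖(ρ * qAnti (1 / q) (shift ρ A) (shift ρ B)).trace‖ ^ 2 ∧
    q ^ 2 * (lam 0 - q * lam (Fin.last n)) ^ 2 *
        ‖(ρ * qAnti (1 / q) (shift ρ A) (shift ρ B)).trace‖ ^ 2 =
      (lam 0 - q * lam (Fin.last n)) ^ 2 *
        ‖(ρ * qAnti q (shift ρ B) (shift ρ A)).trace‖ ^ 2 ∧
    (lam 0 - q * lam (Fin.last n)) ^ 2 *
        ‖(ρ * qAnti q (shift ρ B) (shift ρ A)).trace‖ ^ 2 ≤
      (1 - q) ^ 2 * (lam 0 + q * lam (Fin.last n)) ^ 2 *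
        variance ρ A * variance ρ B := by
  have hq₀ : q ≠ 0 := by linarith
  refine ⟨by rw [neg_div, qComm_neg], ?_, ?_⟩
  · rw [qAnti_swap hq₀, Matrix.mul_smul, trace_smul, smul_eq_mul, norm_mul, Complex.norm_real,
      Real.norm_eq_abs, one_div, mul_pow, sq_abs]
    ring
  · simp only [variance_eq_re_trace_mul_shift_mul_shift htr]
    exact sq_mul_sq_norm_trace_mul_qAnti_le hρ.1 (isHermitian_shift hρ.1 hA)
      (isHermitian_shift hρ.1 hB) hq hlam0 (hlam.1 (Fin.zero_le _)) hlam.eigenvalues_mem_Icc
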